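/- arXiv:1007.3137 — 2 statements merged into one kernel-verified Lean document; each statement's English description precedes it below -/
import Mathlib

section
/- Let s(w) = (w² + y₁²)(w² + y₂²)/w³ with y₁ > y₂ > 0 real. If w_a, w_b ∈ ℂ \ {0} satisfy w_a ≠ w_b, |w_a| = |w_b|, and s(w_a) = s(w_b) = z, then z is real or purely imaginary, i.e. z ∈ ℝ ∪ iℝ. -/
/-!
Write `σ = y₁² + y₂²`, `c = y₁² y₂²`, `p = w_a w_b`, `q = w_a + w_b`. Clearing denominators in
`s(w_a) = s(w_b)` and dividing by `w_a - w_b` gives `c q² = p³ - σ p² + c p`, and then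
`z p² = q (p² - c)`. On the circle `|w|² = t` conjugation is `w ↦ t / w`, so `conj p = t² / p` and
`conj q = t q / p`; comparing the first relation with its conjugate yields
`(p² - t²)(p² + t² - σ p) = 0`. The second factor would mean `Re p = σ / 2` with `|p| = t`, so
`t² ≥ σ² / 4 > c`, and then `c q² = p (c - t²)` makes `c |q|² = t (c - t²)` negative.
Hence `p = ±t`, so `conj q = ±q`, and `z = q (t² - c) / t²` is real or purely imaginary accordingly.
-/

open ComplexConjugate

section SymmetricFunctions

variable {K : Type*} [Field K] {a b z u v : K}

theorem sq_add_relation_of_eq_values (huv : u ≠ v)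
    (hu : (u ^ 2 + a) * (u ^ 2 + b) = z * u ^ 3) (hv : (v ^ 2 + a) * (v ^ 2 + b) = z * v ^ 3) :
    a * b * (u + v) ^ 2 = (u * v) ^ 3 - (a + b) * (u * v) ^ 2 + a * b * (u * v) := by
  have h : (u - v) * (a * b * (u + v) ^ 2
      - ((u * v) ^ 3 - (a + b) * (u * v) ^ 2 + a * b * (u * v))) = 0 := by
    linear_combination u ^ 3 * hv - v ^ 3 * hu
  exact sub_eq_zero.mp ((mul_eq_zero.mp h).resolve_left (sub_ne_zero.mpr huv))

theorem value_mul_sq_of_eq_values (hu0 : u ≠ 0) (hv0 : v ≠ 0) (huv : u ≠ v)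
    (hu : (u ^ 2 + a) * (u ^ 2 + b) = z * u ^ 3) (hv : (v ^ 2 + a) * (v ^ 2 + b) = z * v ^ 3) :
    z * (u * v) ^ 2 = (u + v) * ((u * v) ^ 2 - a * b) := by
  have hsym := sq_add_relation_of_eq_values huv hu hv
  refine mul_right_cancel₀ (mul_ne_zero hu0 hv0) ?_
  linear_combination -v ^ 3 * hu + v * hsym

end SymmetricFunctions

section Circle

variable {u v : ℂ}

theorem mul_mul_conj_of_norm_eq (h : ‖u‖ = ‖v‖) :
    u * v * conj (u * v) = ((‖u‖ ^ 2 : ℝ) : ℂ) ^ 2 := by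
  rw [map_mul, mul_mul_mul_comm, Complex.mul_conj', Complex.mul_conj', h]
  push_cast
  ring

theorem conj_add_mul_of_norm_eq (h : ‖u‖ = ‖v‖) :
    conj (u + v) * (u * v) = ((‖u‖ ^ 2 : ℝ) : ℂ) * (u + v) := by
  have hu := Complex.mul_conj' u
  have hv := Complex.mul_conj' v
  rw [← h] at hv
  push_cast
  rw [map_add]
  linear_combination v * hu + u * hv

end Circle

section Reflection

variable {σ c t : ℝ} {p q z : ℂ}

theorem sq_sub_sq_mul_eq_zero (ht : t ≠ 0) (hp : p * conj p = (t : ℂ) ^ 2)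
    (hq : conj q * p = t * q) (h : c * q ^ 2 = p ^ 3 - σ * p ^ 2 + c * p) :
    (p ^ 2 - (t : ℂ) ^ 2) * (p ^ 2 + (t : ℂ) ^ 2 - σ * p) = 0 := by
  have hc : c * conj q ^ 2 = conj p ^ 3 - σ * conj p ^ 2 + c * conj p := by
    simpa only [map_mul, map_add, map_sub, map_pow, Complex.conj_ofReal] using congrArg conj h
  have key : (t : ℂ) ^ 2 * ((p ^ 2 - (t : ℂ) ^ 2) * (p ^ 2 + (t : ℂ) ^ 2 - σ * p)) = 0 := by
    linear_combination p ^ 3 * hc - (t : ℂ) ^ 2 * p * h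
      - c * p * (conj q * p + t * q) * hq
      + (conj p ^ 2 * p ^ 2 + t ^ 2 * conj p * p + t ^ 4
        - σ * p * (conj p * p + t ^ 2) + c * p ^ 2) * hp
  exact (mul_eq_zero.mp key).resolve_left (by exact_mod_cast pow_ne_zero 2 ht)

theorem sq_add_sq_ne_mul (hc : 0 < c) (hσ : 4 * c < σ ^ 2) (ht : 0 < t)
    (hp : p * conj p = (t : ℂ) ^ 2) (hq : conj q * p = t * q)
    (h : c * q ^ 2 = p ^ 3 - σ * p ^ 2 + c * p) : p ^ 2 + (t : ℂ) ^ 2 ≠ σ * p := by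
  intro hB
  have hnorm : Complex.normSq p = t ^ 2 := by
    rw [Complex.mul_conj] at hp
    exact_mod_cast hp
  have hp0 : p ≠ 0 := by
    rintro rfl
    rw [map_zero] at hnorm
    exact (pow_pos ht 2).ne hnorm
  have hre : 2 * p.re = σ := by
    have h' : p * (p + conj p - σ) = 0 := by linear_combination hB + hp
    have := sub_eq_zero.mp ((mul_eq_zero.mp h').resolve_left hp0)
    rw [Complex.add_conj] at this
    exact_mod_cast this
  have hct : c < t ^ 2 := by
    have hσre : σ ^ 2 = 4 * (p.re * p.re) := by rw [← hre]; ring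
    linarith [Complex.re_sq_le_normSq p]
  have hq2 : c * q ^ 2 = p * (c - (t : ℂ) ^ 2) := by linear_combination h + p * hB
  have hq0 : q ≠ 0 := by
    rintro rfl
    have : p * ((c - t ^ 2 : ℝ) : ℂ) = 0 := by push_cast; linear_combination -hq2
    exact (mul_ne_zero hp0 (by exact_mod_cast (sub_neg.mpr hct).ne)) this
  have hnq : c * Complex.normSq q = t * (c - t ^ 2) := by
    have h' : q * (c * (q * conj q) - t * (c - (t : ℂ) ^ 2)) = 0 := by
      linear_combination conj q * hq2 + (c - (t : ℂ) ^ 2) * hq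
    have := sub_eq_zero.mp ((mul_eq_zero.mp h').resolve_left hq0)
    rw [Complex.mul_conj] at this
    exact_mod_cast this
  nlinarith [mul_pos hc (Complex.normSq_pos.mpr hq0), mul_pos ht (sub_pos.mpr hct)]

theorem im_eq_zero_or_re_eq_zero_of_sq_eq_sq (ht : t ≠ 0) (hq : conj q * p = t * q)
    (hz : z * p ^ 2 = q * (p ^ 2 - c)) (hA : p ^ 2 = (t : ℂ) ^ 2) : z.im = 0 ∨ z.re = 0 := by
  have ht' : (t : ℂ) ≠ 0 := by exact_mod_cast ht
  have htC : (t : ℂ) ^ 2 ≠ 0 := pow_ne_zero 2 ht'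
  have hzt : z * (t : ℂ) ^ 2 = q * ((t : ℂ) ^ 2 - c) := by rwa [hA] at hz
  have hzt' : conj z * (t : ℂ) ^ 2 = conj q * ((t : ℂ) ^ 2 - c) := by
    simpa only [map_mul, map_sub, map_pow, Complex.conj_ofReal] using congrArg conj hzt
  rcases sq_eq_sq_iff_eq_or_eq_neg.mp hA with rfl | rfl
  · left
    have hqq : conj q = q :=
      mul_right_cancel₀ ht' (show conj q * t = q * t by linear_combination hq)
    refine Complex.conj_eq_iff_im.mp (mul_right_cancel₀ htC ?_)
    rw [hzt', hqq, hzt]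
  · right
    have hqq : conj q = -q :=
      mul_right_cancel₀ ht' (show conj q * t = -q * t by linear_combination -hq)
    have hzz : conj z = -z := mul_right_cancel₀ htC <|
      show conj z * t ^ 2 = -z * t ^ 2 by rw [hzt', hqq]; linear_combination hzt
    have := congrArg Complex.re hzz
    simp only [Complex.conj_re, Complex.neg_re] at this
    linarith

end Reflection

theorem equal_modulus_values_real_or_imaginary (y₁ y₂ : ℝ) (h21 : y₂ < y₁) (h2 : 0 < y₂)
    (wa wb z : ℂ) (hwa : wa ≠ 0) (hwb : wb ≠ 0) (hne : wa ≠ wb)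
    (habs : ‖wa‖ = ‖wb‖)
    (hza : (wa ^ 2 + (y₁ : ℂ) ^ 2) * (wa ^ 2 + (y₂ : ℂ) ^ 2) / wa ^ 3 = z)
    (hzb : (wb ^ 2 + (y₁ : ℂ) ^ 2) * (wb ^ 2 + (y₂ : ℂ) ^ 2) / wb ^ 3 = z) :
    z.im = 0 ∨ z.re = 0 := by
  have hua := (div_eq_iff (pow_ne_zero 3 hwa)).mp hza
  have hub := (div_eq_iff (pow_ne_zero 3 hwb)).mp hzb
  set σ : ℝ := y₁ ^ 2 + y₂ ^ 2
  set c : ℝ := y₁ ^ 2 * y₂ ^ 2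
  have hsym : (c : ℂ) * (wa + wb) ^ 2
      = (wa * wb) ^ 3 - σ * (wa * wb) ^ 2 + c * (wa * wb) := by
    push_cast [σ, c]
    exact sq_add_relation_of_eq_values hne hua hub
  have hz : z * (wa * wb) ^ 2 = (wa + wb) * ((wa * wb) ^ 2 - c) := by
    push_cast [c]
    exact value_mul_sq_of_eq_values hwa hwb hne hua hub
  have ht : 0 < ‖wa‖ ^ 2 := by positivity
  have hp := mul_mul_conj_of_norm_eq habs
  have hq := conj_add_mul_of_norm_eq habs
  rcases mul_eq_zero.mp (sq_sub_sq_mul_eq_zero ht.ne' hp hq hsym) with hA | hB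
  · exact im_eq_zero_or_re_eq_zero_of_sq_eq_sq ht.ne' hq hz (sub_eq_zero.mp hA)
  · have hc : 0 < c := by have := h2.trans h21; positivity
    have hσ : 4 * c < σ ^ 2 := by nlinarith [mul_pos (sub_pos.mpr h21) (add_pos (h2.trans h21) h2)]
    exact absurd (by linear_combination hB) (sq_add_sq_ne_mul hc hσ ht hp hq hsym)
end

section
/- Let ŝ(w) = (w + ξ)²(w − x₁)(w − x₂)/w³ with ξ > 0 and x₁, x₂ < 0 real. If w_a, w_b ∈ ℂ \ {0} satisfy w_a ≠ w_b, |w_a| = |w_b|, and ŝ(w_a) = ŝ(w_b) = z, then z is real; in fact w_b is the complex conjugate of w_a. -/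
/-!
On a circle `|w| = r`, the distance from `w` to a point `c < 0` of the real axis satisfies
`|w - c|² = r² - 2c·Re w + c²`, so it increases strictly with `Re w`. All four roots
`-ξ, -ξ, x₁, x₂` of the numerator of `ŝ` are negative, hence `|ŝ(w)|` is strictly increasing in
`Re w` on the circle. Two distinct points of the circle with the same value of `ŝ` therefore share
their real part, i.e. are complex conjugates, and since `ŝ` has real coefficients,
`z = ŝ(conj w_a) = conj (ŝ(w_a)) = conj z`.
-/

open ComplexConjugate

namespace Complex

lemma sq_norm_sub_ofReal (w : ℂ) (c : ℝ) : ‖w - c‖ ^ 2 = ‖w‖ ^ 2 - 2 * c * w.re + c ^ 2 := by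
  simp only [Complex.sq_norm, normSq_apply, sub_re, sub_im, ofReal_re, ofReal_im]
  ring

lemma norm_sub_ofReal_lt_of_re_lt {w w' : ℂ} {c : ℝ} (hc : c < 0) (hw : ‖w‖ = ‖w'‖)
    (hre : w.re < w'.re) : ‖w - c‖ < ‖w' - c‖ := by
  rw [← sq_lt_sq₀ (norm_nonneg _) (norm_nonneg _), sq_norm_sub_ofReal, sq_norm_sub_ofReal, hw]
  nlinarith

lemma eq_conj_of_re_eq_of_norm_eq {w w' : ℂ} (hne : w ≠ w') (hw : ‖w‖ = ‖w'‖)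
    (hre : w.re = w'.re) : w' = conj w := by
  have him_sq : w'.im ^ 2 = w.im ^ 2 := by
    rw [← sq_norm_sub_sq_re, ← sq_norm_sub_sq_re, hw, hre]
  rcases sq_eq_sq_iff_eq_or_eq_neg.mp him_sq with him | him
  · exact absurd (Complex.ext hre him.symm) hne
  · exact Complex.ext (by simp [hre]) (by simp [him])

lemma norm_pos_of_norm_eq_of_re_lt {w w' : ℂ} (hw : ‖w‖ = ‖w'‖) (hre : w.re < w'.re) :
    0 < ‖w‖ := by
  linarith [neg_abs_le w.re, le_abs_self w'.re, abs_re_le_norm w, abs_re_le_norm w']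

end Complex

open Complex

noncomputable def sHat (ξ x₁ x₂ : ℝ) (w : ℂ) : ℂ :=
  (w + ξ) ^ 2 * (w - x₁) * (w - x₂) / w ^ 3

lemma sHat_conj (ξ x₁ x₂ : ℝ) (w : ℂ) : sHat ξ x₁ x₂ (conj w) = conj (sHat ξ x₁ x₂ w) := by
  simp [sHat, map_div₀]

section

variable {ξ x₁ x₂ : ℝ} {w w' : ℂ}

lemma norm_sHat_lt_of_re_lt (hξ : 0 < ξ) (hx₁ : x₁ < 0) (hx₂ : x₂ < 0) (hw : ‖w‖ = ‖w'‖)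
    (hre : w.re < w'.re) : ‖sHat ξ x₁ x₂ w‖ < ‖sHat ξ x₁ x₂ w'‖ := by
  have add_eq_sub (v : ℂ) : v + ξ = v - ((-ξ : ℝ) : ℂ) := by push_cast; ring
  have hξ_lt := norm_sub_ofReal_lt_of_re_lt (neg_neg_of_pos hξ) hw hre
  have hx₁_lt := norm_sub_ofReal_lt_of_re_lt hx₁ hw hre
  have hx₂_lt := norm_sub_ofReal_lt_of_re_lt hx₂ hw hre
  have hpos := norm_pos_of_norm_eq_of_re_lt hw hre
  simp only [sHat, norm_div, norm_mul, norm_pow, add_eq_sub, ← hw]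
  gcongr ?_ / _
  exact mul_lt_mul'' (mul_lt_mul'' (by gcongr) hx₁_lt (by positivity) (norm_nonneg _))
    hx₂_lt (by positivity) (norm_nonneg _)

lemma re_eq_of_sHat_eq_of_norm_eq (hξ : 0 < ξ) (hx₁ : x₁ < 0) (hx₂ : x₂ < 0) (hw : ‖w‖ = ‖w'‖)
    (heq : sHat ξ x₁ x₂ w = sHat ξ x₁ x₂ w') : w.re = w'.re := by
  refine le_antisymm (not_lt.1 fun hlt => ?_) (not_lt.1 fun hlt => ?_)
  · exact (norm_sHat_lt_of_re_lt hξ hx₁ hx₂ hw.symm hlt).ne' (by rw [heq])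
  · exact (norm_sHat_lt_of_re_lt hξ hx₁ hx₂ hw hlt).ne (by rw [heq])

end

theorem equal_modulus_values_real_two_cut_general (ξ x₁ x₂ : ℝ) (hξ : 0 < ξ)
    (hx₁ : x₁ < 0) (hx₂ : x₂ < 0)
    (wa wb z : ℂ) (hne : wa ≠ wb)
    (habs : ‖wa‖ = ‖wb‖)
    (hza : (wa + (ξ : ℂ)) ^ 2 * (wa - (x₁ : ℂ)) * (wa - (x₂ : ℂ)) / wa ^ 3 = z)
    (hzb : (wb + (ξ : ℂ)) ^ 2 * (wb - (x₁ : ℂ)) * (wb - (x₂ : ℂ)) / wb ^ 3 = z) :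
    wb = starRingEnd ℂ wa ∧ z.im = 0 := by
  change sHat ξ x₁ x₂ wa = z at hza
  change sHat ξ x₁ x₂ wb = z at hzb
  have hconj : wb = conj wa := eq_conj_of_re_eq_of_norm_eq hne habs
    (re_eq_of_sHat_eq_of_norm_eq hξ hx₁ hx₂ habs (hza.trans hzb.symm))
  refine ⟨hconj, conj_eq_iff_im.mp ?_⟩
  calc conj z = sHat ξ x₁ x₂ (conj wa) := by rw [sHat_conj, hza]
    _ = z := by rw [← hconj, hzb]

theorem equal_modulus_values_real_two_cut (ξ x₁ x₂ : ℝ) (hξ : 0 < ξ)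
    (hx₁ : x₁ < 0) (hx₂ : x₂ < 0)
    (wa wb z : ℂ) (hwa : wa ≠ 0) (hwb : wb ≠ 0) (hne : wa ≠ wb)
    (habs : ‖wa‖ = ‖wb‖)
    (hza : (wa + (ξ : ℂ)) ^ 2 * (wa - (x₁ : ℂ)) * (wa - (x₂ : ℂ)) / wa ^ 3 = z)
    (hzb : (wb + (ξ : ℂ)) ^ 2 * (wb - (x₁ : ℂ)) * (wb - (x₂ : ℂ)) / wb ^ 3 = z) :
    wb = starRingEnd ℂ wa ∧ z.im = 0 :=
  equal_modulus_values_real_two_cut_general ξ x₁ x₂ hξ hx₁ hx₂ wa wb z hne habs hza hzb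
end
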